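/- arXiv:2207.10231 — 4 statements merged into one kernel-verified Lean document; each statement's English description precedes it below -/
import Mathlib

section
/- Let μ : [0,1] → ℝ be a probability density with μ ≥ c > 0 and μ ∈ C^α for an integer α ≥ 1, with ‖μ‖_{C^α} ≤ B. Then the inverse (F^μ)⁻¹ of the CDF F^μ belongs to C^{α+1}([0,1]), with a norm bound depending only on α, c, B. -/
open MeasureTheory Set
open Filter Topology Function
open scoped Nat

/-!
The CDF `F` has derivative `μ ≥ c > 0` on `[0, 1]`, so its inverse `g` is continuous and solves the
autonomous equation `g' = v ∘ g` with `v = μ⁻¹`. Faà di Bruno applied to `u ↦ u⁻¹` and `μ` bounds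
the derivatives of `v` up to order `α` in terms of `α`, `c`, `B` only. Bootstrapping `g' = v ∘ g`
then gives `g ∈ C^(α+1)`, and Faà di Bruno applied to `v ∘ g` bounds `g⁽ʲ⁺¹⁾` by the lower
derivatives of `g`, which yields a bound by induction on `j`.
-/

theorem ContinuousOn.continuousOn_invFunOn_image {X Y : Type*} [TopologicalSpace X] [Nonempty X]
    [TopologicalSpace Y] [T2Space Y] {f : X → Y} {s : Set X} (hs : IsCompact s)
    (hf : ContinuousOn f s) (hinj : InjOn f s) : ContinuousOn (invFunOn f s) (f '' s) := by
  refine continuousOn_iff_isClosed.2 fun K hK => ⟨f '' (s ∩ K), ?_, ?_⟩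
  · exact ((hs.inter_right hK).image_of_continuousOn (hf.mono inter_subset_left)).isClosed
  · ext y
    constructor
    · rintro ⟨hxK, x, hx, rfl⟩
      rw [mem_preimage, hinj.leftInvOn_invFunOn hx] at hxK
      exact ⟨⟨x, ⟨hx, hxK⟩, rfl⟩, x, hx, rfl⟩
    · rintro ⟨⟨x, ⟨hx, hxK⟩, rfl⟩, -⟩
      refine ⟨?_, x, hx, rfl⟩
      rwa [mem_preimage, hinj.leftInvOn_invFunOn hx]

theorem HasDerivWithinAt.of_local_left_inverse {𝕜 : Type*} [NontriviallyNormedField 𝕜]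
    {f g : 𝕜 → 𝕜} {f' a : 𝕜} {s t : Set 𝕜} (hg : Tendsto g (𝓝[s] a) (𝓝[t] (g a)))
    (hf : HasDerivWithinAt f f' t (g a)) (hf' : f' ≠ 0) (ha : a ∈ s)
    (hfg : ∀ᶠ y in 𝓝[s] a, f (g y) = y) : HasDerivWithinAt g f'⁻¹ s a :=
  (show HasFDerivWithinAt f ((ContinuousLinearEquiv.unitsEquivAut 𝕜 (Units.mk0 f' hf') :
    𝕜 →L[𝕜] 𝕜)) t (g a) from hf).of_local_left_inverse hg ha hfg

theorem hasDerivWithinAt_integral_Icc {f : ℝ → ℝ} {a b x : ℝ} (hf : ContinuousOn f (Icc a b))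
    (hx : x ∈ Icc a b) :
    HasDerivWithinAt (fun t => ∫ y in a..t, f y) (f x) (Icc a b) x := by
  have hab : a ≤ b := hx.1.trans hx.2
  set ν := IccExtend hab ((Icc a b).domRestrict f)
  have hν : Continuous ν :=
    continuous_IccExtend_iff.2 (continuousOn_iff_continuous_domRestrict.1 hf)
  have hνf : EqOn f ν (Icc a b) := fun y hy =>
    (IccExtend_of_mem hab ((Icc a b).domRestrict f) hy).symm
  refine ((hν.integral_hasStrictDerivAt a x).hasDerivAt.hasDerivWithinAt.congr_deriv
    (hνf hx).symm).congr_of_mem (fun t ht => intervalIntegral.integral_congr fun y hy => ?_) hx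
  rw [uIcc_of_le ht.1] at hy
  exact hνf ⟨hy.1, hy.2.trans ht.2⟩

theorem hasDerivWithinAt_invFunOn_Icc {F f : ℝ → ℝ} {a b y : ℝ} (hab : a ≤ b)
    (hF : ∀ x ∈ Icc a b, HasDerivWithinAt F (f x) (Icc a b) x) (hf : ∀ x ∈ Icc a b, 0 < f x)
    (hy : y ∈ Icc (F a) (F b)) :
    HasDerivWithinAt (invFunOn F (Icc a b)) (f (invFunOn F (Icc a b) y))⁻¹ (Icc (F a) (F b)) y := by
  have hFc : ContinuousOn F (Icc a b) := fun x hx => (hF x hx).continuousWithinAt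
  have hmono : StrictMonoOn F (Icc a b) := strictMonoOn_of_hasDerivWithinAt_pos (convex_Icc a b)
    hFc (fun x hx => (hF x (interior_subset hx)).mono interior_subset)
    (fun x hx => hf x (interior_subset hx))
  have hsurj : SurjOn F (Icc a b) (Icc (F a) (F b)) := intermediate_value_Icc hab hFc
  have hcont : ContinuousOn (invFunOn F (Icc a b)) (Icc (F a) (F b)) := by
    simpa only [hFc.image_Icc_of_monotoneOn hab hmono.monotoneOn] using
      hFc.continuousOn_invFunOn_image isCompact_Icc hmono.injOn
  exact .of_local_left_inverse ((hcont y hy).tendsto_nhdsWithin hsurj.mapsTo_invFunOn)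
    (hF _ (hsurj.mapsTo_invFunOn hy)) (hf _ (hsurj.mapsTo_invFunOn hy)).ne' hy
    (eventually_nhdsWithin_of_forall hsurj.rightInvOn_invFunOn)

theorem norm_iteratedDeriv_inv_le {c u : ℝ} (hc : 0 < c) (hcu : c ≤ u) (n : ℕ) :
    ‖iteratedDeriv n Inv.inv u‖ ≤ n ! / c ^ (n + 1) := by
  have hu : 0 < u := hc.trans_le hcu
  rw [iteratedDeriv_eq_iterate, iter_deriv_inv,
    show (-1 - n : ℤ) = -((n + 1 : ℕ) : ℤ) by push_cast; ring, zpow_neg, zpow_natCast, norm_mul,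
    norm_mul, norm_pow, norm_neg, norm_one, one_pow, one_mul, Real.norm_natCast, norm_inv,
    Real.norm_of_nonneg (by positivity), ← div_eq_mul_inv]
  gcongr

section Composition

variable {𝕜 : Type*} [NontriviallyNormedField 𝕜] {F : Type*} [NormedAddCommGroup F]
  [NormedSpace 𝕜 F]

theorem norm_iteratedDerivWithin_comp_le {g : 𝕜 → F} {f : 𝕜 → 𝕜} {n : ℕ} {s t : Set 𝕜} {x : 𝕜}
    (hg : ContDiffOn 𝕜 n g t) (hf : ContDiffOn 𝕜 n f s) (ht : UniqueDiffOn 𝕜 t)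
    (hs : UniqueDiffOn 𝕜 s) (hst : MapsTo f s t) (hx : x ∈ s) {C D : ℝ}
    (hC : ∀ i ≤ n, ‖iteratedDerivWithin i g t (f x)‖ ≤ C)
    (hD : ∀ i, 1 ≤ i → i ≤ n → ‖iteratedDerivWithin i f s x‖ ≤ D ^ i) :
    ‖iteratedDerivWithin n (g ∘ f) s x‖ ≤ n ! * C * D ^ n := by
  simp only [← norm_iteratedFDerivWithin_eq_norm_iteratedDerivWithin] at hC hD ⊢
  exact norm_iteratedFDerivWithin_comp_le hg hf le_rfl ht hs hst hx hC hD

end Composition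

section AutonomousODE

variable {𝕜 : Type*} [NontriviallyNormedField 𝕜] {s t : Set 𝕜} {g v : 𝕜 → 𝕜} {n : ℕ}

theorem contDiffOn_succ_of_hasDerivWithinAt_comp (hs : UniqueDiffOn 𝕜 s)
    (hv : ContDiffOn 𝕜 n v t) (hg : MapsTo g s t)
    (hderiv : ∀ x ∈ s, HasDerivWithinAt g (v (g x)) s x) : ContDiffOn 𝕜 (n + 1) g s := by
  have hdiff : DifferentiableOn 𝕜 g s := fun x hx => (hderiv x hx).differentiableWithinAt
  have hderivWithin : EqOn (derivWithin g s) (v ∘ g) s :=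
    fun x hx => (hderiv x hx).derivWithin (hs x hx)
  suffices ∀ k ≤ n + 1, ContDiffOn 𝕜 k g s by exact_mod_cast this (n + 1) le_rfl
  intro k hk
  induction k with
  | zero => exact contDiffOn_zero.2 hdiff.continuousOn
  | succ k ih =>
    rw [Nat.cast_succ, contDiffOn_succ_iff_derivWithin hs]
    refine ⟨hdiff, by simp, ?_⟩
    exact ((hv.of_le (by exact_mod_cast Nat.le_of_succ_le_succ hk)).comp (ih (by omega)) hg).congr
      hderivWithin

/-- Bound on `‖g⁽ʲ⁺¹⁾‖` when `g' = v ∘ g` and `K` bounds the derivatives of `v` of order `≤ j`: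
the Faà di Bruno bound `j! K D ^ j` on `(v ∘ g)⁽ʲ⁾`, where `D ≥ 1` bounds the lower derivatives
of `g`. -/
noncomputable def autonomousODEBound (K : ℝ) : ℕ → ℝ
  | 0 => max 1 K
  | j + 1 => max (autonomousODEBound K j) ((j + 1)! * K * autonomousODEBound K j ^ (j + 1))

theorem one_le_autonomousODEBound (K : ℝ) : ∀ j, 1 ≤ autonomousODEBound K j
  | 0 => le_max_left _ _
  | j + 1 => (one_le_autonomousODEBound K j).trans (le_max_left _ _)

theorem monotone_autonomousODEBound (K : ℝ) : Monotone (autonomousODEBound K) :=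
  monotone_nat_of_le_succ fun _ => le_max_left _ _

theorem norm_iteratedDerivWithin_succ_le_autonomousODEBound (hs : UniqueDiffOn 𝕜 s)
    (ht : UniqueDiffOn 𝕜 t) (hv : ContDiffOn 𝕜 n v t) (hg : MapsTo g s t)
    (hderiv : ∀ x ∈ s, HasDerivWithinAt g (v (g x)) s x) {K : ℝ}
    (hK : ∀ i ≤ n, ∀ y ∈ t, ‖iteratedDerivWithin i v t y‖ ≤ K) {j : ℕ} (hj : j ≤ n) {x : 𝕜}
    (hx : x ∈ s) : ‖iteratedDerivWithin (j + 1) g s x‖ ≤ autonomousODEBound K j := by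
  induction j using Nat.strong_induction_on generalizing x with
  | _ j ih =>
  have hgj : iteratedDerivWithin (j + 1) g s x = iteratedDerivWithin j (v ∘ g) s x := by
    rw [iteratedDerivWithin_succ']
    exact iteratedDerivWithin_congr (fun y hy => (hderiv y hy).derivWithin (hs y hy)) hx
  rw [hgj]
  cases j with
  | zero =>
    have hK₀ := hK 0 hj _ (hg hx)
    rw [iteratedDerivWithin_zero] at hK₀ ⊢
    exact hK₀.trans (le_max_right _ _)
  | succ j =>
    set D := autonomousODEBound K j
    have hD : ∀ i, 1 ≤ i → i ≤ j + 1 → ‖iteratedDerivWithin i g s x‖ ≤ D ^ i := by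
      intro i hi₁ hi
      obtain ⟨i, rfl⟩ : ∃ i', i = i' + 1 := ⟨i - 1, by omega⟩
      calc ‖iteratedDerivWithin (i + 1) g s x‖ ≤ autonomousODEBound K i :=
            ih i (by omega) (by omega) hx
        _ ≤ D := monotone_autonomousODEBound K (by omega)
        _ ≤ D ^ (i + 1) := le_self_pow₀ (one_le_autonomousODEBound K j) (by omega)
    calc ‖iteratedDerivWithin (j + 1) (v ∘ g) s x‖ ≤ (j + 1)! * K * D ^ (j + 1) :=
          norm_iteratedDerivWithin_comp_le (hv.of_le (by exact_mod_cast hj))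
            ((contDiffOn_succ_of_hasDerivWithinAt_comp hs hv hg hderiv).of_le
              (by exact_mod_cast hj.trans (Nat.le_succ n)))
            ht hs hg hx (fun i hi => hK i (hi.trans hj) _ (hg hx)) hD
      _ ≤ autonomousODEBound K (j + 1) := le_max_right _ _

end AutonomousODE

theorem norm_iteratedDerivWithin_inv_le {f : ℝ → ℝ} {s : Set ℝ} (hs : UniqueDiffOn ℝ s) {n : ℕ}
    (hf : ContDiffOn ℝ n f s) {c B : ℝ} (hc : 0 < c) (hfc : ∀ x ∈ s, c ≤ f x)
    (hB : ∀ i ≤ n, ∀ x ∈ s, ‖iteratedDerivWithin i f s x‖ ≤ B) {i : ℕ} (hi : i ≤ n) {x : ℝ}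
    (hx : x ∈ s) :
    ‖iteratedDerivWithin i (fun y => (f y)⁻¹) s x‖
      ≤ n ! * (n ! * max 1 c⁻¹ ^ (n + 1)) * max 1 B ^ n := by
  have hmaps : MapsTo f s {0}ᶜ := fun y hy => (hc.trans_le (hfc y hy)).ne'
  have hC : ∀ k ≤ i, ‖iteratedDerivWithin k Inv.inv {0}ᶜ (f x)‖ ≤ n ! * max 1 c⁻¹ ^ (n + 1) := by
    intro k hk
    rw [iteratedDerivWithin_of_isOpen isOpen_compl_singleton (hmaps hx)]
    calc ‖iteratedDeriv k Inv.inv (f x)‖ ≤ k ! / c ^ (k + 1) :=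
          norm_iteratedDeriv_inv_le hc (hfc x hx) k
      _ = k ! * c⁻¹ ^ (k + 1) := by rw [div_eq_mul_inv, inv_pow]
      _ ≤ n ! * max 1 c⁻¹ ^ (n + 1) := by
        gcongr
        · omega
        · exact (pow_le_pow_left₀ (by positivity) (le_max_right _ _) _).trans
            (pow_le_pow_right₀ (le_max_left _ _) (by omega))
  have hD : ∀ k, 1 ≤ k → k ≤ i → ‖iteratedDerivWithin k f s x‖ ≤ max 1 B ^ k := fun k hk₁ hk =>
    ((hB k (hk.trans hi) x hx).trans (le_max_right _ _)).trans
      (le_self_pow₀ (le_max_left _ _) (by omega))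
  calc ‖iteratedDerivWithin i (Inv.inv ∘ f) s x‖
      ≤ i ! * (n ! * max 1 c⁻¹ ^ (n + 1)) * max 1 B ^ i :=
        norm_iteratedDerivWithin_comp_le (contDiffOn_inv ℝ) (hf.of_le (by exact_mod_cast hi))
          isOpen_compl_singleton.uniqueDiffOn hs hmaps hx hC hD
    _ ≤ n ! * (n ! * max 1 c⁻¹ ^ (n + 1)) * max 1 B ^ n := by
        gcongr
        exact le_max_left _ _

theorem stmt3_general (α : ℕ) (c B : ℝ) (hc : 0 < c) :
    ∃ C > 0, ∀ μ : ℝ → ℝ,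
      ContDiffOn ℝ α μ (Icc 0 1) →
      (∀ x ∈ Icc (0:ℝ) 1, c ≤ μ x) →
      (∀ x ∈ Icc (0:ℝ) 1,
        (∑ i ∈ Finset.range (α + 1), ‖iteratedDerivWithin i μ (Icc 0 1) x‖) ≤ B) →
      (∫ y in (0:ℝ)..1, μ y) = 1 →
      ContDiffOn ℝ (α + 1)
        (Function.invFunOn (fun t => ∫ y in (0:ℝ)..t, μ y) (Icc 0 1)) (Icc 0 1) ∧
      ∀ i ≤ α + 1, ∀ x ∈ Icc (0:ℝ) 1,
        ‖iteratedDerivWithin i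
          (Function.invFunOn (fun t => ∫ y in (0:ℝ)..t, μ y) (Icc 0 1)) (Icc 0 1) x‖ ≤ C := by
  refine ⟨autonomousODEBound (α ! * (α ! * max 1 c⁻¹ ^ (α + 1)) * max 1 B ^ α) α,
    one_pos.trans_le (one_le_autonomousODEBound _ _), fun μ hμ hμc hμB hμ1 => ?_⟩
  set F := fun t => ∫ y in (0:ℝ)..t, μ y
  have hUD : UniqueDiffOn ℝ (Icc (0:ℝ) 1) := uniqueDiffOn_Icc zero_lt_one
  have hF : ∀ x ∈ Icc (0:ℝ) 1, HasDerivWithinAt F (μ x) (Icc 0 1) x :=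
    fun x hx => hasDerivWithinAt_integral_Icc hμ.continuousOn hx
  have hF01 : Icc (F 0) (F 1) = Icc 0 1 := by simp [F, hμ1]
  have hmaps : MapsTo (invFunOn F (Icc 0 1)) (Icc 0 1) (Icc 0 1) := by
    simpa only [hF01] using SurjOn.mapsTo_invFunOn (intermediate_value_Icc zero_le_one
      fun x hx => (hF x hx).continuousWithinAt)
  have hderiv : ∀ y ∈ Icc (0:ℝ) 1, HasDerivWithinAt (invFunOn F (Icc 0 1))
      ((fun x => (μ x)⁻¹) (invFunOn F (Icc 0 1) y)) (Icc 0 1) y := by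
    simpa only [hF01] using fun y => hasDerivWithinAt_invFunOn_Icc zero_le_one hF
      (fun x hx => hc.trans_le (hμc x hx)) (y := y)
  have hμ_deriv_le : ∀ i ≤ α, ∀ x ∈ Icc (0:ℝ) 1, ‖iteratedDerivWithin i μ (Icc 0 1) x‖ ≤ B :=
    fun i hi x hx => (Finset.single_le_sum (f := fun k => ‖iteratedDerivWithin k μ (Icc 0 1) x‖)
      (fun k _ => norm_nonneg _)
      (Finset.mem_range.2 (by omega))).trans (hμB x hx)
  have hv : ContDiffOn ℝ α (fun x => (μ x)⁻¹) (Icc 0 1) :=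
    hμ.inv fun x hx => (hc.trans_le (hμc x hx)).ne'
  refine ⟨contDiffOn_succ_of_hasDerivWithinAt_comp hUD hv hmaps hderiv, ?_⟩
  rintro (_ | j) hj x hx
  · rw [iteratedDerivWithin_zero, Real.norm_eq_abs]
    exact (abs_le.2 ⟨by linarith [(hmaps hx).1], (hmaps hx).2⟩).trans
      (one_le_autonomousODEBound _ _)
  · exact (norm_iteratedDerivWithin_succ_le_autonomousODEBound hUD hUD hv hmaps hderiv
      (fun i hi y hy => norm_iteratedDerivWithin_inv_le hUD hμ hc hμc hμ_deriv_le hi hy) (by omega)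
      hx).trans (monotone_autonomousODEBound _ (by omega))

theorem stmt3 (α : ℕ) (hα : 1 ≤ α) (c B : ℝ) (hc : 0 < c) (hB : 0 < B) :
    ∃ C > 0, ∀ μ : ℝ → ℝ,
      ContDiffOn ℝ α μ (Icc 0 1) →
      (∀ x ∈ Icc (0:ℝ) 1, c ≤ μ x) →
      (∀ x ∈ Icc (0:ℝ) 1,
        (∑ i ∈ Finset.range (α + 1), ‖iteratedDerivWithin i μ (Icc 0 1) x‖) ≤ B) →
      (∫ y in (0:ℝ)..1, μ y) = 1 →
      ContDiffOn ℝ (α + 1)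
        (Function.invFunOn (fun t => ∫ y in (0:ℝ)..t, μ y) (Icc 0 1)) (Icc 0 1) ∧
      ∀ i ≤ α + 1, ∀ x ∈ Icc (0:ℝ) 1,
        ‖iteratedDerivWithin i
          (Function.invFunOn (fun t => ∫ y in (0:ℝ)..t, μ y) (Icc 0 1)) (Icc 0 1) x‖ ≤ C :=
  stmt3_general α c B hc
end

section
/- Let Φ : ℝ → (K_min, K_max) be Lipschitz with 0 < K_min < K_max. For bounded functions F, G : [0,1] → ℝ, define S_F(x) = (∫₀ˣ Φ∘F) / (∫₀¹ Φ∘F) and similarly S_G. Then there is a constant M depending only on K_min, K_max and the Lipschitz constant of Φ such that sup_x |S_F(x) - S_G(x)| ≤ M · sup_y |F(y) - G(y)| and sup_x |S_F'(x) - S_G'(x)| ≤ M · sup_y |F(y) - G(y)|. -/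
open MeasureTheory Set

lemma aux_stmt6 {Kmin Kmax E P Q A B : ℝ} (h0 : 0 < Kmin)
    (hA1 : Kmin ≤ A) (hB1 : Kmin ≤ B) (hB2 : B ≤ Kmax)
    (hPQ : |P - Q| ≤ E) (hQ : |Q| ≤ Kmax) (hAB : |A - B| ≤ E) :
    |P / A - Q / B| ≤ 2 * Kmax * E / Kmin ^ 2 := by
  have hA0 : 0 < A := h0.trans_le hA1
  have hB0 : 0 < B := h0.trans_le hB1
  have hE : 0 ≤ E := le_trans (abs_nonneg _) hPQ
  have hKmax : 0 < Kmax := hB0.trans_le hB2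
  have key : |P * B - A * Q| ≤ 2 * Kmax * E := by
    have h1 : P * B - A * Q = (P - Q) * B + Q * (B - A) := by ring
    rw [h1]
    calc |(P - Q) * B + Q * (B - A)| ≤ |(P - Q) * B| + |Q * (B - A)| := abs_add_le _ _
      _ = |P - Q| * |B| + |Q| * |B - A| := by rw [abs_mul, abs_mul]
      _ ≤ E * Kmax + Kmax * E := by
          have hB : |B| ≤ Kmax := (abs_of_pos hB0).le.trans hB2
          have hBA : |B - A| ≤ E := (abs_sub_comm B A) ▸ hAB
          exact add_le_add (mul_le_mul hPQ hB (abs_nonneg _) hE)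
            (mul_le_mul hQ hBA (abs_nonneg _) hKmax.le)
      _ = 2 * Kmax * E := by ring
  rw [div_sub_div _ _ hA0.ne' hB0.ne', abs_div, abs_of_pos (mul_pos hA0 hB0)]
  exact div_le_div₀ (by positivity) key (by positivity) (by nlinarith)

theorem stmt6 (Kmin Kmax : ℝ) (h0 : 0 < Kmin) (hK : Kmin < Kmax) (LΦ : NNReal) :
    ∃ M > 0, ∀ Φ : ℝ → ℝ, LipschitzWith LΦ Φ → (∀ t, Φ t ∈ Ioo Kmin Kmax) →
      ∀ F G : ℝ → ℝ, Continuous F → Continuous G →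
      ∀ D : ℝ, (∀ y ∈ Icc (0:ℝ) 1, |F y - G y| ≤ D) →
      (∀ x ∈ Icc (0:ℝ) 1,
        |(∫ y in (0:ℝ)..x, Φ (F y)) / (∫ y in (0:ℝ)..1, Φ (F y)) -
          (∫ y in (0:ℝ)..x, Φ (G y)) / (∫ y in (0:ℝ)..1, Φ (G y))| ≤ M * D) ∧
      (∀ x ∈ Icc (0:ℝ) 1,
        |Φ (F x) / (∫ y in (0:ℝ)..1, Φ (F y)) -
          Φ (G x) / (∫ y in (0:ℝ)..1, Φ (G y))| ≤ M * D) := by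
  set L : ℝ := (LΦ : ℝ) with hLdef
  have hL0 : 0 ≤ L := LΦ.coe_nonneg
  have hKmax : 0 < Kmax := h0.trans hK
  refine ⟨2 * Kmax * L / Kmin ^ 2 + 1, by positivity, ?_⟩
  intro Φ hL hΦ F G hF hG D hD
  have hD0 : 0 ≤ D := le_trans (abs_nonneg _) (hD 0 ⟨le_refl _, zero_le_one⟩)
  have hcF : Continuous fun y => Φ (F y) := hL.continuous.comp hF
  have hcG : Continuous fun y => Φ (G y) := hL.continuous.comp hG
  have hLD : 0 ≤ L * D := mul_nonneg hL0 hD0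
  -- pointwise Lipschitz bound
  have hlip : ∀ y ∈ Icc (0:ℝ) 1, |Φ (F y) - Φ (G y)| ≤ L * D := by
    intro y hy
    have h1 : |Φ (F y) - Φ (G y)| ≤ L * |F y - G y| := by
      have := hL.dist_le_mul (F y) (G y)
      simpa [Real.dist_eq] using this
    exact h1.trans (mul_le_mul_of_nonneg_left (hD y hy) hL0)
  -- bounds on the denominators
  have hA1 : Kmin ≤ ∫ y in (0:ℝ)..1, Φ (F y) := by
    have := intervalIntegral.integral_mono_on (a := (0:ℝ)) (b := 1) zero_le_one
      (intervalIntegrable_const (c := Kmin) (μ := volume)) (hcF.intervalIntegrable 0 1)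
      (fun y _ => (hΦ (F y)).1.le)
    simpa using this
  have hB1 : Kmin ≤ ∫ y in (0:ℝ)..1, Φ (G y) := by
    have := intervalIntegral.integral_mono_on (a := (0:ℝ)) (b := 1) zero_le_one
      (intervalIntegrable_const (c := Kmin) (μ := volume)) (hcG.intervalIntegrable 0 1)
      (fun y _ => (hΦ (G y)).1.le)
    simpa using this
  have hB2 : (∫ y in (0:ℝ)..1, Φ (G y)) ≤ Kmax := by
    have := intervalIntegral.integral_mono_on (a := (0:ℝ)) (b := 1) zero_le_one
      (hcG.intervalIntegrable 0 1) (intervalIntegrable_const (c := Kmax) (μ := volume))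
      (fun y _ => (hΦ (G y)).2.le)
    simpa using this
  -- difference of numerator integrals (for any upper bound x in [0,1])
  have hdiff : ∀ x ∈ Icc (0:ℝ) 1,
      |(∫ y in (0:ℝ)..x, Φ (F y)) - ∫ y in (0:ℝ)..x, Φ (G y)| ≤ L * D := by
    intro x hx
    rw [← intervalIntegral.integral_sub (hcF.intervalIntegrable 0 x)
      (hcG.intervalIntegrable 0 x)]
    have h := intervalIntegral.norm_integral_le_of_norm_le_const (a := (0:ℝ)) (b := x)
      (C := L * D) (f := fun y => Φ (F y) - Φ (G y)) (fun y hy => by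
        have hy' : y ∈ Icc (0:ℝ) 1 := by
          have h2 : y ∈ Set.uIoc (0:ℝ) x := hy
          rw [Set.uIoc_of_le hx.1] at h2
          exact ⟨h2.1.le, h2.2.trans hx.2⟩
        simpa [Real.norm_eq_abs] using hlip y hy')
    have h' : |∫ y in (0:ℝ)..x, (Φ (F y) - Φ (G y))| ≤ L * D * |x| := by
      simpa [Real.norm_eq_abs] using h
    have hxabs : |x| ≤ 1 := by rw [abs_of_nonneg hx.1]; exact hx.2
    nlinarith [abs_nonneg (∫ y in (0:ℝ)..x, (Φ (F y) - Φ (G y)))]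
  have hAB : |(∫ y in (0:ℝ)..1, Φ (F y)) - ∫ y in (0:ℝ)..1, Φ (G y)| ≤ L * D :=
    hdiff 1 ⟨zero_le_one, le_refl 1⟩
  -- bound on numerators
  have hQbd : ∀ x ∈ Icc (0:ℝ) 1, |∫ y in (0:ℝ)..x, Φ (G y)| ≤ Kmax := by
    intro x hx
    have h := intervalIntegral.norm_integral_le_of_norm_le_const (a := (0:ℝ)) (b := x)
      (C := Kmax) (f := fun y => Φ (G y)) (fun y _ => by
        have h1 := hΦ (G y)
        have h2 : |Φ (G y)| = Φ (G y) := abs_of_pos (h0.trans h1.1)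
        simpa [Real.norm_eq_abs, h2] using h1.2.le)
    have h' : |∫ y in (0:ℝ)..x, Φ (G y)| ≤ Kmax * |x| := by
      simpa [Real.norm_eq_abs] using h
    have hxabs : |x| ≤ 1 := by rw [abs_of_nonneg hx.1]; exact hx.2
    nlinarith [abs_nonneg (∫ y in (0:ℝ)..x, Φ (G y))]
  have hfin : 2 * Kmax * (L * D) / Kmin ^ 2 ≤ (2 * Kmax * L / Kmin ^ 2 + 1) * D := by
    have h1 : 2 * Kmax * (L * D) / Kmin ^ 2 = (2 * Kmax * L / Kmin ^ 2) * D := by ring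
    rw [h1]
    nlinarith
  constructor
  · intro x hx
    have key := aux_stmt6 h0 hA1 hB1 hB2 (hdiff x hx) (hQbd x hx) hAB
    exact key.trans hfin
  · intro x hx
    have hQ : |Φ (G x)| ≤ Kmax := by
      have h1 := hΦ (G x)
      have h2 : |Φ (G x)| = Φ (G x) := abs_of_pos (h0.trans h1.1)
      rw [h2]; exact h1.2.le
    have key := aux_stmt6 h0 hA1 hB1 hB2 (hlip x hx) hQ hAB
    exact key.trans hfin
end

section
/- In the setting of the previous statement (one-dimensional transports to a fixed C¹ reference density η ≥ c with η ∈ C¹), additionally assume (F^η)⁻¹ ∈ C². Then the derivatives satisfy the pointwise bound |S'(x) − S̄'(x)| ≤ C (|F^p(x) − F^{p̄}(x)| + |p(x) − p̄(x)|), and consequently ‖S' − S̄'‖_{L²([0,1])} ≤ C' ‖p − p̄‖_{L²([0,1])}. -/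
open MeasureTheory Set

/-!
With `K = G'`, the product rule for differences gives
`K(F^p) p - K(F^p̄) p̄ = (K(F^p) - K(F^p̄)) p + K(F^p̄) (p - p̄)`. The `C²` bound on `G` makes `K`
bounded and Lipschitz, and a Lipschitz density of unit mass is bounded by `1 + M`; this is the
pointwise estimate. For the `L²` estimate, `|F^p(x) - F^p̄(x)| ≤ ‖p - p̄‖_{L¹} ≤ ‖p - p̄‖_{L²}`,
the last step being `Var |p - p̄| ≥ 0` for the uniform probability on `[0,1]`.
-/

lemma abs_mul_sub_mul_le {ka kb a b u v B U : ℝ} (hkb : |kb| ≤ B) (hk : |ka - kb| ≤ B * |a - b|)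
    (hu : |u| ≤ U) : |ka * u - kb * v| ≤ B * (U + 1) * (|a - b| + |u - v|) := by
  have hB : 0 ≤ B := (abs_nonneg _).trans hkb
  have hU : 0 ≤ U := (abs_nonneg _).trans hu
  calc |ka * u - kb * v| = |(ka - kb) * u + kb * (u - v)| := by ring_nf
    _ ≤ |ka - kb| * |u| + |kb| * |u - v| := by
        rw [← abs_mul, ← abs_mul]; exact abs_add_le _ _
    _ ≤ B * |a - b| * U + B * |u - v| := by gcongr
    _ ≤ B * (U + 1) * (|a - b| + |u - v|) := by
        nlinarith [mul_nonneg (mul_nonneg hB hU) (abs_nonneg (u - v)),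
          mul_nonneg hB (abs_nonneg (a - b))]

lemma LipschitzOnWith.le_intervalIntegral_add {p : ℝ → ℝ} {M : NNReal}
    (hp : LipschitzOnWith M p (Icc 0 1)) {x : ℝ} (hx : x ∈ Icc (0:ℝ) 1) :
    p x ≤ (∫ y in (0:ℝ)..1, p y) + M := by
  have hlow : ∀ y ∈ Icc (0:ℝ) 1, p x - M ≤ p y := by
    intro y hy
    have hxy : dist x y ≤ 1 := by
      rw [Real.dist_eq]; exact (abs_sub_le_of_le_of_le hx.1 hx.2 hy.1 hy.2).trans (by norm_num)
    have := (hp.dist_le_mul x hx y hy).trans (mul_le_of_le_one_right M.coe_nonneg hxy)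
    linarith [(abs_le.1 (Real.dist_eq (p x) (p y) ▸ this)).2]
  have := intervalIntegral.integral_mono_on (μ := volume) zero_le_one intervalIntegrable_const
    (hp.continuousOn.intervalIntegrable_of_Icc zero_le_one) hlow
  simp only [intervalIntegral.integral_const, sub_zero, one_smul] at this
  linarith

lemma intervalIntegral_mem_Icc_of_nonneg {p : ℝ → ℝ} {a b x : ℝ}
    (hp0 : ∀ y ∈ Icc a b, 0 ≤ p y) (hp : IntervalIntegrable p volume a b) (hx : x ∈ Icc a b) :
    (∫ y in a..x, p y) ∈ Icc 0 (∫ y in a..b, p y) :=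
  ⟨intervalIntegral.integral_nonneg hx.1 fun y hy => hp0 y ⟨hy.1, hy.2.trans hx.2⟩,
    intervalIntegral.integral_mono_interval le_rfl hx.1 hx.2
      (ae_restrict_of_forall_mem measurableSet_Ioc fun y hy => hp0 y ⟨hy.1.le, hy.2⟩) hp⟩

lemma abs_intervalIntegral_sub_le_integral_abs_sub {p q : ℝ → ℝ} {a b x : ℝ}
    (hp : IntegrableOn p (Icc a b)) (hq : IntegrableOn q (Icc a b)) (hx : x ∈ Icc a b) :
    |(∫ y in a..x, p y) - ∫ y in a..x, q y| ≤ ∫ y in Icc a b, |p y - q y| := by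
  have hsub : Icc a x ⊆ Icc a b := Icc_subset_Icc le_rfl hx.2
  have hpx : IntervalIntegrable p volume a x :=
    (intervalIntegrable_iff_integrableOn_Icc_of_le hx.1).2 (hp.mono_set hsub)
  have hqx : IntervalIntegrable q volume a x :=
    (intervalIntegrable_iff_integrableOn_Icc_of_le hx.1).2 (hq.mono_set hsub)
  rw [← intervalIntegral.integral_sub hpx hqx]
  calc |∫ y in a..x, (p y - q y)| ≤ ∫ y in a..x, |p y - q y| :=
        intervalIntegral.abs_integral_le_integral_abs hx.1
    _ = ∫ y in Ioc a x, |p y - q y| := intervalIntegral.integral_of_le hx.1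
    _ ≤ ∫ y in Icc a b, |p y - q y| :=
        setIntegral_mono_set (hp.sub hq).abs (ae_of_all _ fun _ => abs_nonneg _)
          (Ioc_subset_Icc_self.trans hsub).eventuallyLE

lemma norm_derivWithin_sub_le {E : Type*} [NormedAddCommGroup E] [NormedSpace ℝ E]
    {G : ℝ → E} {s : Set ℝ} {B : ℝ} (hs : UniqueDiffOn ℝ s) (hconv : Convex ℝ s)
    (hG : ContDiffOn ℝ 2 G s) (hbd : ∀ y ∈ s, ‖iteratedDerivWithin 2 G s y‖ ≤ B)
    {a b : ℝ} (ha : a ∈ s) (hb : b ∈ s) :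
    ‖derivWithin G s a - derivWithin G s b‖ ≤ B * ‖a - b‖ := by
  have h2 : iteratedDerivWithin 2 G s = derivWithin (derivWithin G s) s := by
    rw [iteratedDerivWithin_succ, iteratedDerivWithin_one]
  rw [h2] at hbd
  exact hconv.norm_image_sub_le_of_norm_derivWithin_le
    ((hG.derivWithin hs (by norm_num)).differentiableOn one_ne_zero) hbd hb ha

lemma sq_integral_abs_le_integral_sq {α : Type*} [MeasurableSpace α] {μ : Measure α}
    [IsProbabilityMeasure μ] {g : α → ℝ} (hg : MemLp g 2 μ) :
    (∫ x, |g x| ∂μ) ^ 2 ≤ ∫ x, g x ^ 2 ∂μ := by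
  have := ProbabilityTheory.variance_eq_sub hg.abs
  have h0 := ProbabilityTheory.variance_nonneg |g| μ
  simp only [Pi.pow_apply, Pi.abs_apply, sq_abs] at this
  linarith

lemma sqrt_integral_sq_le_of_abs_le {α : Type*} [MeasurableSpace α] {μ : Measure α}
    [IsProbabilityMeasure μ] {f g : α → ℝ} {C : ℝ} (hC : 0 ≤ C) (hg : MemLp g 2 μ)
    (hfg : ∀ᵐ x ∂μ, |f x| ≤ C * ((∫ y, |g y| ∂μ) + |g x|)) :
    √(∫ x, f x ^ 2 ∂μ) ≤ 2 * C * √(∫ x, g x ^ 2 ∂μ) := by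
  set A := ∫ y, |g y| ∂μ
  have hA : A ^ 2 ≤ ∫ x, g x ^ 2 ∂μ := sq_integral_abs_le_integral_sq hg
  have hsq : ∀ᵐ x ∂μ, f x ^ 2 ≤ 2 * C ^ 2 * (A ^ 2 + g x ^ 2) := by
    filter_upwards [hfg] with x hx
    have : f x ^ 2 ≤ (C * (A + |g x|)) ^ 2 := by
      rw [← sq_abs (f x)]; exact pow_le_pow_left₀ (abs_nonneg _) hx 2
    nlinarith [sq_abs (g x), sq_nonneg (A - |g x|), sq_nonneg C]
  have hint : ∫ x, f x ^ 2 ∂μ ≤ 2 * C ^ 2 * (A ^ 2 + ∫ x, g x ^ 2 ∂μ) := by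
    have hg2 := hg.integrable_sq
    calc ∫ x, f x ^ 2 ∂μ ≤ ∫ x, 2 * C ^ 2 * (A ^ 2 + g x ^ 2) ∂μ :=
          integral_mono_of_nonneg (ae_of_all _ fun x => sq_nonneg (f x))
            ((integrable_const _).add hg2 |>.const_mul _) hsq
      _ = 2 * C ^ 2 * (A ^ 2 + ∫ x, g x ^ 2 ∂μ) := by
          rw [integral_const_mul, integral_add (integrable_const _) hg2, integral_const]
          simp
  calc √(∫ x, f x ^ 2 ∂μ) ≤ √((2 * C) ^ 2 * ∫ x, g x ^ 2 ∂μ) :=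
        Real.sqrt_le_sqrt (by nlinarith [sq_nonneg C])
    _ = 2 * C * √(∫ x, g x ^ 2 ∂μ) := by
        rw [Real.sqrt_mul (sq_nonneg _), Real.sqrt_sq (by positivity)]

theorem stmt14_general (m Bg : ℝ) (M : NNReal) (hm : 0 < m) (hBg : 0 < Bg)
    -- G = (F^η)⁻¹, assumed to be C² with C²-norm bounded by Bg
    (G : ℝ → ℝ)
    (hGsm : ContDiffOn ℝ 2 G (Icc 0 1))
    (hGbd : ∀ i ≤ 2, ∀ y ∈ Icc (0:ℝ) 1, ‖iteratedDerivWithin i G (Icc 0 1) y‖ ≤ Bg) :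
    ∃ C > 0, ∃ C' > 0, ∀ p p' : ℝ → ℝ,
      LipschitzOnWith M p (Icc 0 1) → LipschitzOnWith M p' (Icc 0 1) →
      (∀ x ∈ Icc (0:ℝ) 1, m ≤ p x) → (∀ x ∈ Icc (0:ℝ) 1, m ≤ p' x) →
      (∫ y in (0:ℝ)..1, p y) = 1 → (∫ y in (0:ℝ)..1, p' y) = 1 →
      (∀ x ∈ Icc (0:ℝ) 1,
        |derivWithin G (Icc 0 1) (∫ y in (0:ℝ)..x, p y) * p x -
          derivWithin G (Icc 0 1) (∫ y in (0:ℝ)..x, p' y) * p' x| ≤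
        C * (|(∫ y in (0:ℝ)..x, p y) - ∫ y in (0:ℝ)..x, p' y| + |p x - p' x|)) ∧
      Real.sqrt (∫ x in Icc (0:ℝ) 1,
          (derivWithin G (Icc 0 1) (∫ y in (0:ℝ)..x, p y) * p x -
            derivWithin G (Icc 0 1) (∫ y in (0:ℝ)..x, p' y) * p' x) ^ 2) ≤
        C' * Real.sqrt (∫ x in Icc (0:ℝ) 1, (p x - p' x) ^ 2) := by
  have hK : ∀ y ∈ Icc (0:ℝ) 1, |derivWithin G (Icc 0 1) y| ≤ Bg := fun y hy => by
    simpa using hGbd 1 (by norm_num) y hy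
  have hKlip : ∀ a ∈ Icc (0:ℝ) 1, ∀ b ∈ Icc (0:ℝ) 1,
      |derivWithin G (Icc 0 1) a - derivWithin G (Icc 0 1) b| ≤ Bg * |a - b| := fun a ha b hb =>
    norm_derivWithin_sub_le (uniqueDiffOn_Icc zero_lt_one) (convex_Icc 0 1) hGsm
      (hGbd 2 le_rfl) ha hb
  refine ⟨Bg * ((1 + M) + 1), by positivity, 2 * (Bg * ((1 + M) + 1)), by positivity,
    fun p p' hp hp' hpm hp'm hpi hp'i => ?_⟩
  have hcdf_mem : ∀ q : ℝ → ℝ, LipschitzOnWith M q (Icc 0 1) → (∀ x ∈ Icc (0:ℝ) 1, m ≤ q x) →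
      (∫ y in (0:ℝ)..1, q y) = 1 → ∀ x ∈ Icc (0:ℝ) 1, (∫ y in (0:ℝ)..x, q y) ∈ Icc (0:ℝ) 1 :=
    fun q hq hqm hqi x hx => hqi ▸ intervalIntegral_mem_Icc_of_nonneg
      (fun y hy => hm.le.trans (hqm y hy)) (hq.continuousOn.intervalIntegrable_of_Icc zero_le_one) hx
  have pointwise : ∀ x ∈ Icc (0:ℝ) 1,
      |derivWithin G (Icc 0 1) (∫ y in (0:ℝ)..x, p y) * p x -
        derivWithin G (Icc 0 1) (∫ y in (0:ℝ)..x, p' y) * p' x| ≤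
      Bg * ((1 + M) + 1) * (|(∫ y in (0:ℝ)..x, p y) - ∫ y in (0:ℝ)..x, p' y| + |p x - p' x|) :=
    fun x hx => abs_mul_sub_mul_le (hK _ (hcdf_mem p' hp' hp'm hp'i x hx))
      (hKlip _ (hcdf_mem p hp hpm hpi x hx) _ (hcdf_mem p' hp' hp'm hp'i x hx))
      (abs_le.2 ⟨by linarith [hpm x hx, M.coe_nonneg], hpi ▸ hp.le_intervalIntegral_add hx⟩)
  refine ⟨pointwise, ?_⟩
  have hcont : ContinuousOn (fun x => p x - p' x) (Icc 0 1) :=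
    hp.continuousOn.sub hp'.continuousOn
  have : IsProbabilityMeasure (volume.restrict (Icc (0:ℝ) 1)) := ⟨by simp⟩
  refine sqrt_integral_sq_le_of_abs_le (by positivity)
    ((memLp_two_iff_integrable_sq (hcont.aestronglyMeasurable measurableSet_Icc)).2
      (hcont.pow 2).integrableOn_Icc)
    (ae_restrict_of_forall_mem measurableSet_Icc fun x hx => (pointwise x hx).trans ?_)
  gcongr
  exact abs_intervalIntegral_sub_le_integral_abs_sub hp.continuousOn.integrableOn_Icc
    hp'.continuousOn.integrableOn_Icc hx

theorem stmt14 (c m Bg : ℝ) (M : NNReal) (hc : 0 < c) (hm : 0 < m) (hBg : 0 < Bg)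
    (η : ℝ → ℝ) (hηsm : ContDiffOn ℝ 1 η (Icc 0 1))
    (hηc : ∀ x ∈ Icc (0:ℝ) 1, c ≤ η x) (hη1 : (∫ y in (0:ℝ)..1, η y) = 1)
    -- G = (F^η)⁻¹, assumed to be C² with C²-norm bounded by Bg
    (G : ℝ → ℝ) (hG : ∀ x ∈ Icc (0:ℝ) 1, G (∫ y in (0:ℝ)..x, η y) = x)
    (hGsm : ContDiffOn ℝ 2 G (Icc 0 1))
    (hGbd : ∀ i ≤ 2, ∀ y ∈ Icc (0:ℝ) 1, ‖iteratedDerivWithin i G (Icc 0 1) y‖ ≤ Bg) :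
    ∃ C > 0, ∃ C' > 0, ∀ p p' : ℝ → ℝ,
      LipschitzOnWith M p (Icc 0 1) → LipschitzOnWith M p' (Icc 0 1) →
      (∀ x ∈ Icc (0:ℝ) 1, m ≤ p x) → (∀ x ∈ Icc (0:ℝ) 1, m ≤ p' x) →
      (∫ y in (0:ℝ)..1, p y) = 1 → (∫ y in (0:ℝ)..1, p' y) = 1 →
      (∀ x ∈ Icc (0:ℝ) 1,
        |derivWithin G (Icc 0 1) (∫ y in (0:ℝ)..x, p y) * p x -
          derivWithin G (Icc 0 1) (∫ y in (0:ℝ)..x, p' y) * p' x| ≤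
        C * (|(∫ y in (0:ℝ)..x, p y) - ∫ y in (0:ℝ)..x, p' y| + |p x - p' x|)) ∧
      Real.sqrt (∫ x in Icc (0:ℝ) 1,
          (derivWithin G (Icc 0 1) (∫ y in (0:ℝ)..x, p y) * p x -
            derivWithin G (Icc 0 1) (∫ y in (0:ℝ)..x, p' y) * p' x) ^ 2) ≤
        C' * Real.sqrt (∫ x in Icc (0:ℝ) 1, (p x - p' x) ^ 2) :=
  stmt14_general m Bg M hm hBg G hGsm hGbd
end

section
/- Let U, V ⊆ ℝ^d be bounded open sets and η : V → ℝ bounded and Lipschitz. For C¹ diffeomorphisms S, S̃ : U → V, the pullback densities satisfy ‖S^#η − S̃^#η‖_∞ ≤ C · M(max(‖S‖_{C¹}, ‖S̃‖_{C¹})) · ‖S − S̃‖_{C¹}, where C depends only on η and U and M : (0,∞) → (0,∞) is an increasing function (arising from the local Lipschitz continuity of the determinant on bounded sets of matrices). -/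
open MeasureTheory Set

private lemma prod_diff_le {ι : Type*} [DecidableEq ι] (s : Finset ι) (f g : ι → ℝ) (a D : ℝ)
    (ha : 0 ≤ a) (hD : 0 ≤ D) (hf : ∀ i ∈ s, |f i| ≤ a) (hg : ∀ i ∈ s, |g i| ≤ a)
    (hfg : ∀ i ∈ s, |f i - g i| ≤ D) :
    |∏ i ∈ s, f i - ∏ i ∈ s, g i| ≤ s.card * D * (a + 1) ^ s.card := by
  induction s using Finset.induction_on with
  | empty => simp
  | @insert j s hj ih =>
    rw [Finset.prod_insert hj, Finset.prod_insert hj, Finset.card_insert_of_notMem hj]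
    have h1 : |∏ i ∈ s, f i| ≤ (a + 1) ^ s.card := by
      calc |∏ i ∈ s, f i| = ∏ i ∈ s, |f i| := by rw [Finset.abs_prod]
        _ ≤ ∏ _i ∈ s, (a + 1) := by
            refine Finset.prod_le_prod (fun i _ => abs_nonneg _) (fun i hi => ?_)
            linarith [hf i (Finset.mem_insert_of_mem hi)]
        _ = (a + 1) ^ s.card := by rw [Finset.prod_const]
    have ih' := ih (fun i hi => hf i (Finset.mem_insert_of_mem hi))
      (fun i hi => hg i (Finset.mem_insert_of_mem hi))
      (fun i hi => hfg i (Finset.mem_insert_of_mem hi))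
    have key : f j * ∏ i ∈ s, f i - g j * ∏ i ∈ s, g i
        = (f j - g j) * ∏ i ∈ s, f i + g j * (∏ i ∈ s, f i - ∏ i ∈ s, g i) := by ring
    rw [key]
    have hfgj := hfg j (Finset.mem_insert_self j s)
    have hgj := hg j (Finset.mem_insert_self j s)
    have hpow : (0:ℝ) ≤ (a + 1) ^ s.card := by positivity
    have hpow1 : (a + 1) ^ s.card ≤ (a + 1) ^ (s.card + 1) := by
      refine pow_le_pow_right₀ (by linarith) (by omega)
    calc |(f j - g j) * ∏ i ∈ s, f i + g j * (∏ i ∈ s, f i - ∏ i ∈ s, g i)|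
        ≤ |(f j - g j)| * |∏ i ∈ s, f i| + |g j| * |∏ i ∈ s, f i - ∏ i ∈ s, g i| := by
          refine (abs_add_le _ _).trans ?_
          rw [abs_mul, abs_mul]
      _ ≤ D * (a + 1) ^ s.card + a * (↑s.card * D * (a + 1) ^ s.card) :=
          add_le_add (mul_le_mul hfgj h1 (abs_nonneg _) hD)
            (mul_le_mul hgj ih' (abs_nonneg _) ha)
      _ ≤ D * (a + 1) ^ (s.card + 1) + s.card * D * (a + 1) ^ (s.card + 1) := by
          have h2 : a * (s.card * D * (a + 1) ^ s.card)
              ≤ (a + 1) * (s.card * D * (a + 1) ^ s.card) := by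
            refine mul_le_mul_of_nonneg_right (by linarith) (by positivity)
          have h3 : (a + 1) * (s.card * D * (a + 1) ^ s.card)
              = s.card * D * (a + 1) ^ (s.card + 1) := by ring
          nlinarith [mul_le_mul_of_nonneg_left hpow1 hD]
      _ = (↑s.card + 1) * D * (a + 1) ^ (s.card + 1) := by ring
      _ = ↑(s.card + 1) * D * (a + 1) ^ (s.card + 1) := by push_cast; ring

private lemma det_diff_le {d : ℕ} (A B : Matrix (Fin d) (Fin d) ℝ) (a D : ℝ)
    (ha : 0 ≤ a) (hD : 0 ≤ D)
    (hA : ∀ i j, |A i j| ≤ a) (hB : ∀ i j, |B i j| ≤ a)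
    (hAB : ∀ i j, |A i j - B i j| ≤ D) :
    |A.det - B.det| ≤ (d.factorial : ℝ) * (d * D * (a + 1) ^ d) := by
  rw [Matrix.det_apply', Matrix.det_apply', ← Finset.sum_sub_distrib]
  calc |∑ σ : Equiv.Perm (Fin d), (((Equiv.Perm.sign σ : ℤ) : ℝ) * ∏ i, A (σ i) i
          - ((Equiv.Perm.sign σ : ℤ) : ℝ) * ∏ i, B (σ i) i)|
      ≤ ∑ σ : Equiv.Perm (Fin d), |((Equiv.Perm.sign σ : ℤ) : ℝ) * ∏ i, A (σ i) i
          - ((Equiv.Perm.sign σ : ℤ) : ℝ) * ∏ i, B (σ i) i| := Finset.abs_sum_le_sum_abs _ _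
    _ ≤ ∑ _σ : Equiv.Perm (Fin d), d * D * (a + 1) ^ d := by
        refine Finset.sum_le_sum (fun σ _ => ?_)
        have hε : |((Equiv.Perm.sign σ : ℤ) : ℝ)| = 1 := by
          rcases Int.units_eq_one_or (Equiv.Perm.sign σ) with h | h <;> simp [h]
        rw [← mul_sub, abs_mul, hε, one_mul]
        have := prod_diff_le (Finset.univ : Finset (Fin d)) (fun i => A (σ i) i)
          (fun i => B (σ i) i) a D ha hD (fun i _ => hA _ _) (fun i _ => hB _ _)
          (fun i _ => hAB _ _)
        simpa using this
    _ = (d.factorial : ℝ) * (d * D * (a + 1) ^ d) := by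
        rw [Finset.sum_const, Finset.card_univ, Fintype.card_perm, Fintype.card_fin,
          nsmul_eq_mul]

theorem stmt17 (d : ℕ) (U V : Set (Fin d → ℝ))
    (hUo : IsOpen U) (hUb : Bornology.IsBounded U) (hVb : Bornology.IsBounded V)
    (η : (Fin d → ℝ) → ℝ) (Lη : NNReal) (Bη : ℝ)
    (hηLip : LipschitzOnWith Lη η V) (hηbd : ∀ v ∈ V, |η v| ≤ Bη) :
    ∃ C > 0, ∃ M : ℝ → ℝ,
      (∀ a, 0 < a → 0 < M a) ∧ (∀ a b, 0 < a → a ≤ b → M a ≤ M b) ∧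
      ∀ S S' : (Fin d → ℝ) → (Fin d → ℝ),
        ContDiffOn ℝ 1 S U → ContDiffOn ℝ 1 S' U →
        MapsTo S U V → MapsTo S' U V →
        InjOn S U → InjOn S' U →
        ∀ A D : ℝ, 0 < A →
        (∀ x ∈ U, ‖S x‖ + ‖fderiv ℝ S x‖ ≤ A) →
        (∀ x ∈ U, ‖S' x‖ + ‖fderiv ℝ S' x‖ ≤ A) →
        (∀ x ∈ U, ‖S x - S' x‖ + ‖fderiv ℝ S x - fderiv ℝ S' x‖ ≤ D) →
        ∀ x ∈ U,
          |η (S x) * (fderiv ℝ S x).det - η (S' x) * (fderiv ℝ S' x).det| ≤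
            C * M A * D := by
  set Bη' : ℝ := max Bη 0 with hBη'
  refine ⟨(Lη : ℝ) * d.factorial + Bη' * (d.factorial * d) + 1, by positivity,
    fun a => (a + 1) ^ d, fun a ha => by positivity,
    fun a b ha hab => pow_le_pow_left₀ (by linarith) (by linarith) d, ?_⟩
  intro S S' hS hS' hSV hS'V hSinj hS'inj A D hA hSA hS'A hSSD x hx
  set L := fderiv ℝ S x with hL
  set L' := fderiv ℝ S' x with hL'
  have hD0 : 0 ≤ D := le_trans (by positivity) (hSSD x hx)
  have hA0 : 0 ≤ A := hA.le
  have hLA : ‖L‖ ≤ A := le_trans (le_add_of_nonneg_left (norm_nonneg _)) (hSA x hx)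
  have hL'A : ‖L'‖ ≤ A := le_trans (le_add_of_nonneg_left (norm_nonneg _)) (hS'A x hx)
  have hLL'D : ‖L - L'‖ ≤ D := le_trans (le_add_of_nonneg_left (norm_nonneg _)) (hSSD x hx)
  have hSSxD : ‖S x - S' x‖ ≤ D := le_trans (le_add_of_nonneg_right (norm_nonneg _)) (hSSD x hx)
  set b := Pi.basisFun ℝ (Fin d) with hb
  set Mf := LinearMap.toMatrix b b (L : (Fin d → ℝ) →ₗ[ℝ] (Fin d → ℝ)) with hMf
  set Mg := LinearMap.toMatrix b b (L' : (Fin d → ℝ) →ₗ[ℝ] (Fin d → ℝ)) with hMg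
  have hdetf : L.det = Mf.det := (LinearMap.det_toMatrix b _).symm
  have hdetg : L'.det = Mg.det := (LinearMap.det_toMatrix b _).symm
  have hMfentry : ∀ i j, Mf i j = L (Pi.single j 1) i := by
    intro i j
    simp [hMf, LinearMap.toMatrix_apply, hb]
  have hMgentry : ∀ i j, Mg i j = L' (Pi.single j 1) i := by
    intro i j
    simp [hMg, LinearMap.toMatrix_apply, hb]
  have hsingle : ∀ j : Fin d, ‖(Pi.single j 1 : Fin d → ℝ)‖ = 1 := by
    intro j; rw [Pi.norm_single]; exact norm_one
  have entry_bound : ∀ (T : (Fin d → ℝ) →L[ℝ] (Fin d → ℝ)) (i j : Fin d),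
      |T (Pi.single j 1) i| ≤ ‖T‖ := by
    intro T i j
    calc |T (Pi.single j 1) i| ≤ ‖T (Pi.single j 1)‖ := by
          rw [← Real.norm_eq_abs]; exact norm_le_pi_norm _ i
      _ ≤ ‖T‖ * ‖(Pi.single j 1 : Fin d → ℝ)‖ := T.le_opNorm _
      _ = ‖T‖ := by rw [hsingle, mul_one]
  have hMfb : ∀ i j, |Mf i j| ≤ A := fun i j => by
    rw [hMfentry]; exact (entry_bound L i j).trans hLA
  have hMgb : ∀ i j, |Mg i j| ≤ A := fun i j => by
    rw [hMgentry]; exact (entry_bound L' i j).trans hL'A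
  have hMdiff : ∀ i j, |Mf i j - Mg i j| ≤ D := fun i j => by
    rw [hMfentry, hMgentry]
    have : L (Pi.single j 1) i - L' (Pi.single j 1) i = (L - L') (Pi.single j 1) i := by
      simp
    rw [this]
    exact (entry_bound (L - L') i j).trans hLL'D
  have hdet1 : |Mf.det| ≤ (d.factorial : ℝ) * (A + 1) ^ d := by
    have := Matrix.det_le (A := Mf) (abv := AbsoluteValue.abs) (x := A) hMfb
    simp only [Fintype.card_fin, nsmul_eq_mul] at this
    calc |Mf.det| ≤ (d.factorial : ℝ) * A ^ d := this
      _ ≤ (d.factorial : ℝ) * (A + 1) ^ d := by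
          gcongr <;> linarith
  have hdetdiff : |Mf.det - Mg.det| ≤ (d.factorial : ℝ) * (d * D * (A + 1) ^ d) :=
    det_diff_le Mf Mg A D hA0 hD0 hMfb hMgb hMdiff
  have hη1 : |η (S x) - η (S' x)| ≤ (Lη : ℝ) * D := by
    have := hηLip.dist_le_mul (S x) (hSV hx) (S' x) (hS'V hx)
    rw [Real.dist_eq, dist_eq_norm] at this
    exact this.trans (mul_le_mul_of_nonneg_left hSSxD (NNReal.coe_nonneg _))
  have hη2 : |η (S' x)| ≤ Bη' := (hηbd _ (hS'V hx)).trans (le_max_left _ _)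
  have key : η (S x) * L.det - η (S' x) * L'.det
      = (η (S x) - η (S' x)) * Mf.det + η (S' x) * (Mf.det - Mg.det) := by
    rw [hdetf, hdetg]; ring
  have hpowpos : (0:ℝ) ≤ (A + 1) ^ d := by positivity
  have hfac : (0:ℝ) ≤ (d.factorial : ℝ) := Nat.cast_nonneg _
  calc |η (S x) * L.det - η (S' x) * L'.det|
      = |(η (S x) - η (S' x)) * Mf.det + η (S' x) * (Mf.det - Mg.det)| := by rw [key]
    _ ≤ |η (S x) - η (S' x)| * |Mf.det| + |η (S' x)| * |Mf.det - Mg.det| := by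
        refine (abs_add_le _ _).trans ?_
        rw [abs_mul, abs_mul]
    _ ≤ ((Lη : ℝ) * D) * ((d.factorial : ℝ) * (A + 1) ^ d)
        + Bη' * ((d.factorial : ℝ) * (d * D * (A + 1) ^ d)) :=
        add_le_add (mul_le_mul hη1 hdet1 (abs_nonneg _) (by positivity))
          (mul_le_mul hη2 hdetdiff (abs_nonneg _) (le_trans (abs_nonneg _) hη2))
    _ = ((Lη : ℝ) * d.factorial + Bη' * (d.factorial * d)) * (A + 1) ^ d * D := by ring
    _ ≤ ((Lη : ℝ) * d.factorial + Bη' * (d.factorial * d) + 1) * (A + 1) ^ d * D := by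
        have h1 : (0:ℝ) ≤ (A + 1) ^ d * D := by positivity
        nlinarith
end
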